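/- Let u = w_0 → w_1 → ⋯ → w_m = w be a path in the extended k-Bruhat order on S_n, with w_i = w_{i−1}·t_{a_i b_i}, a_i ≤ k < b_i. Then {a_1, b_1, ..., a_m, b_m} = {i ∈ [n] : u(i) ≠ w(i)}; more precisely, {a_1,...,a_m} = {a : u(a) < w(a)} and {b_1,...,b_m} = {b : u(b) > w(b)}. -/

import Mathlib

/-- `IsKPath k u l` : starting from `u`, the list of position pairs `l`
describes a path of `k`-edges in the Bruhat graph of `S_n`. -/
def IsKPath {n : ℕ} (k : ℕ) : Equiv.Perm (Fin n) → List (Fin n × Fin n) → Prop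
  | _, [] => True
  | u, p :: l => p.1.val < k ∧ k ≤ p.2.val ∧ u p.1 < u p.2 ∧
      IsKPath k (u * Equiv.swap p.1 p.2) l

/-- The labels `τ_i = w_{i-1}(a_i)` of the edges of a path. -/
def pathLabels {n : ℕ} : Equiv.Perm (Fin n) → List (Fin n × Fin n) → List (Fin n)
  | _, [] => []
  | u, p :: l => u p.1 :: pathLabels (u * Equiv.swap p.1 p.2) l

/-- The endpoint `u · t_{a₁b₁} ⋯ t_{a_m b_m}` of a path starting at `u`. -/
def pathEnd {n : ℕ} (u : Equiv.Perm (Fin n)) (l : List (Fin n × Fin n)) : Equiv.Perm (Fin n) :=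
  u * (l.map fun p => Equiv.swap p.1 p.2).prod


/-! Along a `k`-edge `v → v·t_{ab}` the value in position `a` rises, the value in position `b`
falls, and all other values stay put. Hence along a path the values in positions `a ≤ k` only rise
and those in positions `b > k` only fall, so a position is ever moved iff its value differs at the
two ends, and the side of `k` it lies on fixes the direction of the difference. -/

open Equiv

section swap

variable {α : Type*} [DecidableEq α] [Preorder α] {u : Perm α} {a b i : α}

theorem Equiv.Perm.apply_le_mul_swap_apply (hab : u a < u b) (hib : i ≠ b) :
    u i ≤ (u * swap a b) i := by
  by_cases hia : i = a
  · subst hia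
    simpa using hab.le
  · simp [swap_apply_of_ne_of_ne hia hib]

theorem Equiv.Perm.mul_swap_apply_le_apply (hab : u a < u b) (hia : i ≠ a) :
    (u * swap a b) i ≤ u i := by
  by_cases hib : i = b
  · subst hib
    simpa using hab.le
  · simp [swap_apply_of_ne_of_ne hia hib]

end swap

variable {n k : ℕ}

theorem pathEnd_nil (u : Perm (Fin n)) : pathEnd u [] = u := by
  simp [pathEnd]

theorem pathEnd_cons (u : Perm (Fin n)) (p : Fin n × Fin n) (l : List (Fin n × Fin n)) :
    pathEnd u (p :: l) = pathEnd (u * swap p.1 p.2) l := by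
  simp [pathEnd, mul_assoc]

namespace IsKPath

variable {i : Fin n}

theorem apply_le_pathEnd_apply (hi : i.val < k) :
    ∀ {u : Perm (Fin n)} {l : List (Fin n × Fin n)}, IsKPath k u l → u i ≤ pathEnd u l i
  | u, [], _ => by rw [pathEnd_nil]
  | u, p :: l, ⟨_, hb, hab, h⟩ => by
    have hib : i ≠ p.2 := by rintro rfl; omega
    rw [pathEnd_cons]
    exact (u.apply_le_mul_swap_apply hab hib).trans (apply_le_pathEnd_apply hi h)

theorem pathEnd_apply_le_apply (hi : k ≤ i.val) :
    ∀ {u : Perm (Fin n)} {l : List (Fin n × Fin n)}, IsKPath k u l → pathEnd u l i ≤ u i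
  | u, [], _ => by rw [pathEnd_nil]
  | u, p :: l, ⟨ha, _, hab, h⟩ => by
    have hia : i ≠ p.1 := by rintro rfl; omega
    rw [pathEnd_cons]
    exact (pathEnd_apply_le_apply hi h).trans (u.mul_swap_apply_le_apply hab hia)

theorem exists_fst_eq_iff :
    ∀ {u : Perm (Fin n)} {l : List (Fin n × Fin n)}, IsKPath k u l →
      ((∃ p ∈ l, p.1 = i) ↔ u i < pathEnd u l i)
  | u, [], _ => by simp [pathEnd_nil]
  | u, p :: l, ⟨ha, hb, hab, h⟩ => by
    rw [List.exists_mem_cons_iff, pathEnd_cons, exists_fst_eq_iff h]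
    by_cases hia : p.1 = i
    · subst hia
      have hva : (u * swap p.1 p.2) p.1 = u p.2 := by simp
      exact iff_of_true (Or.inl rfl) (hab.trans_le (hva ▸ apply_le_pathEnd_apply ha h))
    by_cases hib : i = p.2
    · subst hib
      have hend := pathEnd_apply_le_apply hb h
      have hvb : (u * swap p.1 p.2) p.2 = u p.1 := by simp
      rw [or_iff_right hia]
      exact iff_of_false (not_lt_of_ge hend) (not_lt_of_ge (hend.trans (hvb ▸ hab.le)))
    · simp [hia, swap_apply_of_ne_of_ne (Ne.symm hia) hib]

theorem exists_snd_eq_iff :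
    ∀ {u : Perm (Fin n)} {l : List (Fin n × Fin n)}, IsKPath k u l →
      ((∃ p ∈ l, p.2 = i) ↔ pathEnd u l i < u i)
  | u, [], _ => by simp [pathEnd_nil]
  | u, p :: l, ⟨ha, hb, hab, h⟩ => by
    rw [List.exists_mem_cons_iff, pathEnd_cons, exists_snd_eq_iff h]
    by_cases hib : p.2 = i
    · subst hib
      have hvb : (u * swap p.1 p.2) p.2 = u p.1 := by simp
      exact iff_of_true (Or.inl rfl) ((hvb ▸ pathEnd_apply_le_apply hb h).trans_lt hab)
    by_cases hia : i = p.1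
    · subst hia
      have hend := apply_le_pathEnd_apply ha h
      have hva : (u * swap p.1 p.2) p.1 = u p.2 := by simp
      rw [or_iff_right hib]
      exact iff_of_false (not_lt_of_ge hend) (not_lt_of_ge ((hva ▸ hab.le).trans hend))
    · simp [hib, swap_apply_of_ne_of_ne hia (Ne.symm hib)]

end IsKPath

/-- For a path `u = w₀ → w₁ → ⋯ → w_m = w` in the extended `k`-Bruhat order
with `w_i = w_{i-1}·t_{a_i b_i}`, one has `{a₁,…,a_m} = {a : u(a) < w(a)}`,
`{b₁,…,b_m} = {b : u(b) > w(b)}`, and their union is `{i : u(i) ≠ w(i)}`. -/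
theorem stmt8 (n k : ℕ) (u w : Equiv.Perm (Fin n))
    (l : List (Fin n × Fin n)) (hpath : IsKPath k u l) (hend : pathEnd u l = w) :
    (∀ i : Fin n, (∃ p ∈ l, p.1 = i) ↔ u i < w i) ∧
      (∀ i : Fin n, (∃ p ∈ l, p.2 = i) ↔ w i < u i) ∧
      (∀ i : Fin n, (∃ p ∈ l, p.1 = i ∨ p.2 = i) ↔ u i ≠ w i) := by
  subst hend
  refine ⟨fun i => hpath.exists_fst_eq_iff, fun i => hpath.exists_snd_eq_iff, fun i => ?_⟩
  rw [ne_iff_lt_or_gt, ← hpath.exists_fst_eq_iff, ← hpath.exists_snd_eq_iff]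
  simp only [← exists_or, ← and_or_left]
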